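/- arXiv:2602.17982 — 2 statements merged into one kernel-verified Lean document; each statement's English description precedes it below -/
import Mathlib

section
/- Let Λ be a finite simple graph, let A, B be sets of vertices, and let Φ₁, Φ₂ ∈ Mincut_Λ(A,B). Then the following are equivalent: (1) Φ₁^A ⊆ Φ₂^A; (2) Φ₂^B ⊆ Φ₁^B; (3) Φ₁ separates Φ₂ from A; (4) Φ₂ separates Φ₁ from B. -/
universe u

/-- `C` separates `A` from `B` in the graph `G`: every vertex of `A \ C` and every vertex of
`B \ C` lie in different connected components of the subgraph induced on the complement of `C`. -/
def Separates {V : Type u} (G : SimpleGraph V) (A B C : Set V) : Prop :=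
  ∀ x (hx : x ∈ A \ C) y (hy : y ∈ B \ C),
    ¬ (G.induce Cᶜ).Reachable ⟨x, hx.2⟩ ⟨y, hy.2⟩

/-- `C` is a minimal cut between `A` and `B`: it separates `A` from `B` and no proper subset
of `C` does. -/
def IsMincutBetween {V : Type u} (G : SimpleGraph V) (A B C : Set V) : Prop :=
  Separates G A B C ∧ ∀ C' ⊆ C, C' ≠ C → ¬ Separates G A B C'

/-- The collection of all minimal cuts between `A` and `B` in `G`. -/
def Mincut {V : Type u} (G : SimpleGraph V) (A B : Set V) : Set (Set V) :=
  {C | IsMincutBetween G A B C}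

/-- `Φ^A`: the union of those connected components of the induced subgraph on the complement of
`Φ` that contain at least one vertex of `A \ Φ`. -/
def sideOf {V : Type u} (G : SimpleGraph V) (A Φ : Set V) : Set V :=
  {v | ∃ (hv : v ∉ Φ), ∃ x, ∃ (hx : x ∈ A \ Φ),
    (G.induce Φᶜ).Reachable ⟨v, hv⟩ ⟨x, hx.2⟩}

/-!
Conditions (1) and (3) are two readings of one fact, valid for arbitrary vertex sets: no vertex
of `Φ₂ \ Φ₁` can be joined to `A` outside `Φ₁`; likewise (2) and (4) with `B` in place of `A`.
For (3) → (4), minimality of `Φ₁` gives for each `x ∈ Φ₁` an `A`–`B` walk meeting `Φ₁` only in `x`.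
If `x` could reach `B` outside `Φ₂`, the initial segment of that walk up to `x` would have to meet
the cut `Φ₂` at some vertex `v ≠ x`, and `v` would then be joined to `A` outside `Φ₁`,
contradicting (3). Exchanging the roles of `A` and `B` gives (4) → (3).
-/

namespace SimpleGraph

variable {V : Type u} {G : SimpleGraph V}

theorem reachable_induce_iff {s : Set V} {x y : V} (hx : x ∈ s) (hy : y ∈ s) :
    (G.induce s).Reachable ⟨x, hx⟩ ⟨y, hy⟩ ↔ ∃ w : G.Walk x y, ∀ v ∈ w.support, v ∈ s := by
  constructor
  · rintro ⟨p⟩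
    refine ⟨p.map (Embedding.induce s).toHom, fun v hv => ?_⟩
    obtain ⟨v, -, rfl⟩ := List.mem_map.mp (p.support_map _ ▸ hv)
    exact v.2
  · rintro ⟨w, hw⟩
    exact ⟨w.induce s hw⟩

variable (G) in
def ReachableOutside (s : Set V) (x y : V) : Prop :=
  ∃ w : G.Walk x y, ∀ v ∈ w.support, v ∉ s

namespace ReachableOutside

variable {s : Set V} {x y z : V}

theorem symm (h : G.ReachableOutside s x y) : G.ReachableOutside s y x := by
  obtain ⟨w, hw⟩ := h
  exact ⟨w.reverse, fun v hv => hw v (by simpa using hv)⟩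

theorem trans (h : G.ReachableOutside s x y) (h' : G.ReachableOutside s y z) :
    G.ReachableOutside s x z := by
  obtain ⟨w, hw⟩ := h
  obtain ⟨w', hw'⟩ := h'
  refine ⟨w.append w', fun v hv => ?_⟩
  rcases Walk.mem_support_append_iff w w' |>.mp hv with hv | hv
  exacts [hw v hv, hw' v hv]

theorem left_notMem (h : G.ReachableOutside s x y) : x ∉ s :=
  h.elim fun w hw => hw x w.start_mem_support

theorem right_notMem (h : G.ReachableOutside s x y) : y ∉ s :=
  h.elim fun w hw => hw y w.end_mem_support

end ReachableOutside

theorem reachable_induce_compl_iff {s : Set V} {x y : V} (hx : x ∉ s) (hy : y ∉ s) :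
    (G.induce sᶜ).Reachable ⟨x, hx⟩ ⟨y, hy⟩ ↔ G.ReachableOutside s x y :=
  reachable_induce_iff (s := sᶜ) hx hy

end SimpleGraph

open SimpleGraph

variable {V : Type u} {G : SimpleGraph V} {A B C Φ₁ Φ₂ : Set V}

theorem separates_iff : Separates G A B C ↔ ∀ x ∈ A, ∀ y ∈ B, ¬ G.ReachableOutside C x y := by
  constructor
  · intro h x hxA y hyB hxy
    exact h x ⟨hxA, hxy.left_notMem⟩ y ⟨hyB, hxy.right_notMem⟩
      ((reachable_induce_compl_iff _ _).mpr hxy)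
  · intro h x hx y hy hxy
    exact h x hx.1 y hy.1 ((reachable_induce_compl_iff _ _).mp hxy)

theorem Separates.symm (h : Separates G A B C) : Separates G B A C :=
  separates_iff.mpr fun x hx y hy hxy => separates_iff.mp h y hy x hx hxy.symm

theorem IsMincutBetween.symm (h : IsMincutBetween G A B C) : IsMincutBetween G B A C :=
  ⟨h.1.symm, fun C' hC' hne hsep => h.2 C' hC' hne hsep.symm⟩

theorem mem_sideOf_iff {v : V} : v ∈ sideOf G A C ↔ ∃ a ∈ A, G.ReachableOutside C v a := by
  constructor
  · rintro ⟨hv, a, ha, hva⟩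
    exact ⟨a, ha.1, (reachable_induce_compl_iff hv ha.2).mp hva⟩
  · rintro ⟨a, ha, hva⟩
    exact ⟨hva.left_notMem, a, ⟨ha, hva.right_notMem⟩, (reachable_induce_compl_iff _ _).mpr hva⟩

theorem sideOf_subset_sideOf_iff : sideOf G A Φ₁ ⊆ sideOf G A Φ₂ ↔ Separates G Φ₂ A Φ₁ := by
  classical
  rw [separates_iff]
  constructor
  · rintro hsub x hx a ha hxa
    obtain ⟨b, -, hxb⟩ := mem_sideOf_iff.mp (hsub (mem_sideOf_iff.mpr ⟨a, ha, hxa⟩))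
    exact hxb.left_notMem hx
  · intro hsep v hv
    obtain ⟨a, ha, w, hw⟩ := mem_sideOf_iff.mp hv
    -- a vertex of `Φ₂` on `w` would be joined to `a` outside `Φ₁` by the tail of `w`
    refine mem_sideOf_iff.mpr ⟨a, ha, w, fun u hu huΦ₂ => hsep u huΦ₂ a ha ?_⟩
    exact ⟨w.dropUntil u hu, fun t ht => hw t (w.support_dropUntil_subset_support hu ht)⟩

theorem IsMincutBetween.exists_walk_meeting_only {x : V} (h : IsMincutBetween G A B C)
    (hx : x ∈ C) : ∃ a ∈ A, ∃ b ∈ B, ∃ w : G.Walk a b,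
      x ∈ w.support ∧ ∀ v ∈ w.support, v ∈ C → v = x := by
  have hssub := Set.sdiff_singleton_ssubset.mpr hx
  have hsep := h.2 _ hssub.subset hssub.ne
  simp only [separates_iff, not_forall, not_not] at hsep
  obtain ⟨a, ha, b, hb, w, hw⟩ := hsep
  have honly : ∀ v ∈ w.support, v ∈ C → v = x := fun v hv hvC => by
    by_contra hvx
    exact hw v hv ⟨hvC, hvx⟩
  refine ⟨a, ha, b, hb, w, ?_, honly⟩
  by_contra hxw
  exact separates_iff.mp h.1 a ha b hb ⟨w, fun v hv hvC => hxw (honly v hv hvC ▸ hv)⟩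

theorem IsMincutBetween.separates_of_separates (h₁ : IsMincutBetween G A B Φ₁)
    (h₂ : Separates G A B Φ₂) (h : Separates G Φ₂ A Φ₁) : Separates G Φ₁ B Φ₂ := by
  classical
  rw [separates_iff] at h h₂ ⊢
  intro x hx y hy hxy
  obtain ⟨a, ha, b, -, w, hxw, honly⟩ := h₁.exists_walk_meeting_only hx
  have hmeet : ∃ v ∈ (w.takeUntil x hxw).support, v ∈ Φ₂ := by
    by_contra! havoid
    exact h₂ a ha y hy (ReachableOutside.trans ⟨_, havoid⟩ hxy)
  obtain ⟨v, hv, hvΦ₂⟩ := hmeet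
  have hvx : v ≠ x := fun hvx => hxy.left_notMem (hvx ▸ hvΦ₂)
  have hxv := Walk.notMem_support_takeUntil_support_takeUntil_subset hvx hxw hv
  have hav : G.ReachableOutside Φ₁ a v := by
    refine ⟨w.takeUntil v (w.support_takeUntil_subset_support hxw hv), fun u hu huΦ₁ => hxv ?_⟩
    exact honly u (w.support_takeUntil_subset_support _ hu) huΦ₁ ▸ hu
  exact h v hvΦ₂ a ha hav.symm

theorem mincut_comparable_tfae_general {V : Type u} (G : SimpleGraph V)
    (A B Φ₁ Φ₂ : Set V) (h₁ : Φ₁ ∈ Mincut G A B) (h₂ : Φ₂ ∈ Mincut G A B) :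
    List.TFAE [sideOf G A Φ₁ ⊆ sideOf G A Φ₂,
      sideOf G B Φ₂ ⊆ sideOf G B Φ₁,
      Separates G Φ₂ A Φ₁,
      Separates G Φ₁ B Φ₂] := by
  tfae_have 1 ↔ 3 := sideOf_subset_sideOf_iff
  tfae_have 2 ↔ 4 := sideOf_subset_sideOf_iff
  tfae_have 3 → 4 := h₁.separates_of_separates h₂.1
  tfae_have 4 → 3 := h₂.symm.separates_of_separates h₁.1.symm
  tfae_finish

/-- Lemma `lem:comparable`. For two minimal cuts `Φ₁, Φ₂` between `A` and `B`,
the following are equivalent: (1) `Φ₁^A ⊆ Φ₂^A`; (2) `Φ₂^B ⊆ Φ₁^B`; (3) `Φ₁` separates `Φ₂`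
from `A`; (4) `Φ₂` separates `Φ₁` from `B`. -/
theorem mincut_comparable_tfae {V : Type u} [Fintype V] (G : SimpleGraph V)
    (A B Φ₁ Φ₂ : Set V) (h₁ : Φ₁ ∈ Mincut G A B) (h₂ : Φ₂ ∈ Mincut G A B) :
    List.TFAE [sideOf G A Φ₁ ⊆ sideOf G A Φ₂,
      sideOf G B Φ₂ ⊆ sideOf G B Φ₁,
      Separates G Φ₂ A Φ₁,
      Separates G Φ₁ B Φ₂] :=
  mincut_comparable_tfae_general G A B Φ₁ Φ₂ h₁ h₂
end

section
/- Let Λ be a finite connected simple graph and let X be a nonempty finite set of vertices of Λ. Then there exists x ∈ X such that all vertices of X∖{x} lie in a single connected component of the induced subgraph of Λ on the complement of {x}. Moreover, if |X| > 1 and x₀ ∈ X is given, then such an x can be chosen with x ≠ x₀. -/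
/-!
Fix `x₀` and let `x ∈ X` be a vertex farthest from `x₀`. A shortest walk from `x₀` to any other
`y ∈ X` avoids `x`: passing through `x` would make it longer than `dist x₀ x ≥ dist x₀ y`.
Hence every vertex of `X ∖ {x}` is joined to `x₀` in `Λ ∖ {x}`.
-/

namespace SimpleGraph

variable {V : Type*} {G : SimpleGraph V}

def IsNonseparating (G : SimpleGraph V) (X : Set V) (x : V) : Prop :=
  ∀ y (hy : y ∈ X \ {x}) z (hz : z ∈ X \ {x}),
    (G.induce ({x} : Set V)ᶜ).Reachable ⟨y, hy.2⟩ ⟨z, hz.2⟩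

theorem Connected.reachable_induce_compl_singleton_of_dist_le (hconn : G.Connected)
    {x₀ x y : V} (hx₀ : x₀ ≠ x) (hy : y ≠ x) (hdist : G.dist x₀ y ≤ G.dist x₀ x) :
    (G.induce ({x} : Set V)ᶜ).Reachable ⟨x₀, hx₀⟩ ⟨y, hy⟩ := by
  classical
  obtain ⟨p, hp⟩ := hconn.exists_walk_length_eq_dist x₀ y
  have hxp : x ∉ p.support := fun hx => by
    have := p.length_takeUntil_lt_length hx hy.symm
    have := G.dist_le (p.takeUntil x hx)
    omega
  exact (p.induce {x}ᶜ fun v hv hvx => hxp (Set.mem_singleton_iff.mp hvx ▸ hv)).reachable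

theorem Connected.isNonseparating_of_forall_dist_le (hconn : G.Connected) {X : Set V}
    {x₀ x : V} (hx₀ : x₀ ≠ x) (hmax : ∀ y ∈ X, G.dist x₀ y ≤ G.dist x₀ x) :
    G.IsNonseparating X x := by
  intro y hy z hz
  exact (hconn.reachable_induce_compl_singleton_of_dist_le hx₀ hy.2 (hmax y hy.1)).symm.trans
    (hconn.reachable_induce_compl_singleton_of_dist_le hx₀ hz.2 (hmax z hz.1))

theorem Connected.exists_isNonseparating_ne (hconn : G.Connected) {X : Set V} (hX : X.Finite)
    {x₀ y : V} (hy : y ∈ X) (hyx₀ : y ≠ x₀) : ∃ x ∈ X, x ≠ x₀ ∧ G.IsNonseparating X x := by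
  obtain ⟨x, ⟨hxX, hxx₀⟩, hmax⟩ :=
    Set.exists_max_image (X \ {x₀}) (G.dist x₀) hX.sdiff ⟨y, hy, hyx₀⟩
  refine ⟨x, hxX, hxx₀, hconn.isNonseparating_of_forall_dist_le (Ne.symm hxx₀) fun z hz => ?_⟩
  rcases eq_or_ne z x₀ with rfl | hzx₀
  · simp
  · exact hmax z ⟨hz, hzx₀⟩

end SimpleGraph

/-- Lemma `lem:graph`. In a finite connected graph, any nonempty finite set
`X` of vertices has an element `x` such that `X ∖ {x}` lies in a single connected component of
`Λ ∖ {x}`; moreover, if `|X| > 1` and `x₀ ∈ X` is given, such an `x` can be chosen with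
`x ≠ x₀`. -/
theorem exists_noncut_vertex {V : Type u} [Fintype V] (G : SimpleGraph V)
    (hconn : G.Connected) (X : Set V) (hX : X.Nonempty) :
    (∃ x ∈ X, ∀ y (hy : y ∈ X \ {x}) z (hz : z ∈ X \ {x}),
        (G.induce ({x} : Set V)ᶜ).Reachable ⟨y, hy.2⟩ ⟨z, hz.2⟩) ∧
    (∀ x₀ ∈ X, 1 < X.ncard →
      ∃ x ∈ X, x ≠ x₀ ∧ ∀ y (hy : y ∈ X \ {x}) z (hz : z ∈ X \ {x}),
        (G.induce ({x} : Set V)ᶜ).Reachable ⟨y, hy.2⟩ ⟨z, hz.2⟩) := by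
  have hXfin : X.Finite := X.toFinite
  have exists_ne : ∀ x₀ ∈ X, 1 < X.ncard → ∃ x ∈ X, x ≠ x₀ ∧ G.IsNonseparating X x :=
    fun x₀ _ hcard =>
      let ⟨_, hy, hyx₀⟩ := X.exists_ne_of_one_lt_ncard hcard x₀
      hconn.exists_isNonseparating_ne hXfin hy hyx₀
  refine ⟨?_, exists_ne⟩
  obtain ⟨x₀, hx₀⟩ := hX
  by_cases hcard : 1 < X.ncard
  · obtain ⟨x, hx, -, hsep⟩ := exists_ne x₀ hx₀ hcard
    exact ⟨x, hx, hsep⟩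
  · have hsub : X ⊆ {x₀} := fun y hy => (Set.ncard_le_one_iff hXfin).mp (not_lt.mp hcard) hy hx₀
    exact ⟨x₀, hx₀, fun y hy => absurd (hsub hy.1) hy.2⟩
end
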